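/- Newman-Garbage Lemma: Let (A, →) be an ARS and D ⊆ A a set of non-garbage elements such that → is weakly garbage separating (a ∈ D and a → b implies b ∈ D) and terminating modulo garbage (no infinite chain starting in D). Then → is confluent modulo garbage with respect to D if and only if it is locally confluent modulo garbage with respect to D. -/

import Mathlib

/-- An ARS is terminating iff there is no infinite reduction chain. -/
def Terminating {A : Type*} (r : A → A → Prop) : Prop :=
  ¬ ∃ f : ℕ → A, ∀ n, r (f n) (f (n + 1))

/-- An ARS is finitely branching iff every element has finitely many direct successors. -/
def FinitelyBranching {A : Type*} (r : A → A → Prop) : Prop :=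
  ∀ a, {b | r a b}.Finite

/-- Two elements are joinable iff they reduce to a common element. -/
def Joinable {A : Type*} (r : A → A → Prop) (a b : A) : Prop :=
  ∃ c, Relation.ReflTransGen r a c ∧ Relation.ReflTransGen r b c

/-- An ARS is confluent. -/
def Confluent {A : Type*} (r : A → A → Prop) : Prop :=
  ∀ x y₁ y₂, Relation.ReflTransGen r x y₁ → Relation.ReflTransGen r x y₂ →
    Joinable r y₁ y₂


/-- Weakly garbage separating: D is closed under single steps. -/
def WeaklyGarbageSeparating {A : Type*} (r : A → A → Prop) (D : Set A) : Prop :=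
  ∀ x y, r x y → x ∈ D → y ∈ D

/-- Terminating modulo garbage: no infinite chain starting in D. -/
def TerminatingModGarbage {A : Type*} (r : A → A → Prop) (D : Set A) : Prop :=
  ¬ ∃ f : ℕ → A, f 0 ∈ D ∧ ∀ n, r (f n) (f (n + 1))

/-- Confluent modulo garbage with respect to D. -/
def ConfluentModGarbage {A : Type*} (r : A → A → Prop) (D : Set A) : Prop :=
  ∀ x ∈ D, ∀ y₁ y₂, Relation.ReflTransGen r x y₁ → Relation.ReflTransGen r x y₂ →
    Joinable r y₁ y₂

/-- Locally confluent modulo garbage with respect to D. -/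
def LocallyConfluentModGarbage {A : Type*} (r : A → A → Prop) (D : Set A) : Prop :=
  ∀ x ∈ D, ∀ y₁ y₂, r x y₁ → r x y₂ → Joinable r y₁ y₂

/-! Newman's argument, run only on `D`: termination modulo garbage makes every element of `D`
accessible for the converse of `r`, so one can induct along reductions starting in `D`; weak garbage
separation keeps the reducts in `D`, where local confluence closes each peak. -/

theorem TerminatingModGarbage.acc_flip {A : Type*} {r : A → A → Prop} {D : Set A}
    (ht : TerminatingModGarbage r D) {a : A} (ha : a ∈ D) : Acc (flip r) a := by
  by_contra hna
  obtain ⟨f, rfl, hf⟩ := not_acc_iff_exists_descending_chain.mp hna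
  exact ht ⟨f, ha, hf⟩

theorem ConfluentModGarbage.locallyConfluentModGarbage {A : Type*} {r : A → A → Prop} {D : Set A}
    (hc : ConfluentModGarbage r D) : LocallyConfluentModGarbage r D :=
  fun x hx _ _ h₁ h₂ => hc x hx _ _ (.single h₁) (.single h₂)

theorem LocallyConfluentModGarbage.joinable_of_acc {A : Type*} {r : A → A → Prop} {D : Set A}
    (hlc : LocallyConfluentModGarbage r D) (hwgs : WeaklyGarbageSeparating r D) {a : A}
    (hacc : Acc (flip r) a) (ha : a ∈ D) {y₁ y₂ : A} (h₁ : Relation.ReflTransGen r a y₁)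
    (h₂ : Relation.ReflTransGen r a y₂) : Joinable r y₁ y₂ := by
  induction hacc generalizing y₁ y₂ with
  | intro a _ ih =>
    rcases h₁.cases_head with rfl | ⟨b₁, hab₁, hb₁y₁⟩
    · exact ⟨y₂, h₂, .refl⟩
    rcases h₂.cases_head with rfl | ⟨b₂, hab₂, hb₂y₂⟩
    · exact ⟨y₁, .refl, h₁⟩
    obtain ⟨u, hb₁u, hb₂u⟩ := hlc a ha b₁ b₂ hab₁ hab₂
    obtain ⟨v, hy₁v, huv⟩ := ih b₁ hab₁ (hwgs a b₁ hab₁ ha) hb₁y₁ hb₁u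
    obtain ⟨w, hy₂w, hvw⟩ := ih b₂ hab₂ (hwgs a b₂ hab₂ ha) hb₂y₂ (hb₂u.trans huv)
    exact ⟨w, hy₁v.trans hvw, hy₂w⟩

/-- Newman-Garbage Lemma. -/
theorem newman_garbage {A : Type*} (r : A → A → Prop) (D : Set A)
    (hwgs : WeaklyGarbageSeparating r D) (ht : TerminatingModGarbage r D) :
    ConfluentModGarbage r D ↔ LocallyConfluentModGarbage r D :=
  ⟨ConfluentModGarbage.locallyConfluentModGarbage, fun hlc _ hx _ _ h₁ h₂ =>
    hlc.joinable_of_acc hwgs (ht.acc_flip hx) hx h₁ h₂⟩
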